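/- The chain-supported distribution λ_x constructed by the greedy procedure (repeatedly assigning mass min{min_{x_j<0}(-x_j/α), min_{x_j>0} x_j} to the sign vector u of the current residual x and subtracting) terminates in at most n+1 steps with a chain u₁ ≻ u₂ ≻ … ≻ u_{k-1} ≻ 0 of strictly decreasing elements of Dⁿ. -/

import Mathlib

open Finset

/-- The three-element domain `D = {-α, 0, 1}`, abstractly. -/
inductive D3 : Type
  | neg : D3
  | zero : D3
  | one : D3
deriving DecidableEq

instance : Fintype D3 :=
  ⟨{D3.neg, D3.zero, D3.one}, by rintro (_ | _ | _) <;> simp⟩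

namespace D3

/-- The embedding of `D3` into `ℝ` sending `neg ↦ -α`, `zero ↦ 0`, `one ↦ 1`. -/
def emb (α : ℝ) : D3 → ℝ
  | neg => -α
  | zero => 0
  | one => 1

/-- The partial order `0 ≺ 1`, `0 ≺ -α`, with `1` and `-α` incomparable. -/
instance : PartialOrder D3 where
  le x y := x = y ∨ x = zero
  le_refl x := Or.inl rfl
  le_trans x y z hxy hyz := by
    rcases hxy with rfl | rfl
    · exact hyz
    · exact Or.inr rfl
  le_antisymm x y hxy hyx := by
    rcases hxy with rfl | rfl
    · rfl
    · rcases hyx with rfl | rfl <;> rfl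

/-- `∧₀` : `1 ∧₀ (-α) = (-α) ∧₀ 1 = 0`, and min w.r.t. `≺` otherwise. -/
def meet0 (x y : D3) : D3 := if x = y then x else zero

/-- `∨₀` : `1 ∨₀ (-α) = (-α) ∨₀ 1 = 0`, and max w.r.t. `≺` otherwise. -/
def join0 (x y : D3) : D3 :=
  if x = y then x else if x = zero then y else if y = zero then x else zero

/-- `∨₁` : `1 ∨₁ (-α) = (-α) ∨₁ 1 = 1`, and max w.r.t. `≺` otherwise. -/
def join1 (x y : D3) : D3 :=
  if x = y then x else if x = zero then y else if y = zero then x else one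

end D3

/-- Componentwise `∧₀` on `Dⁿ`. -/
def vmeet0 {n : ℕ} (a b : Fin n → D3) : Fin n → D3 := fun i => D3.meet0 (a i) (b i)

/-- Componentwise `∨₀` on `Dⁿ`. -/
def vjoin0 {n : ℕ} (a b : Fin n → D3) : Fin n → D3 := fun i => D3.join0 (a i) (b i)

/-- Componentwise `∨₁` on `Dⁿ`. -/
def vjoin1 {n : ℕ} (a b : Fin n → D3) : Fin n → D3 := fun i => D3.join1 (a i) (b i)

/-- `lam` is a probability distribution on `Dⁿ`. -/
def IsDist (n : ℕ) (lam : (Fin n → D3) → ℝ) : Prop :=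
  (∀ a, 0 ≤ lam a ∧ lam a ≤ 1) ∧ ∑ a : Fin n → D3, lam a = 1

/-- `lam` has marginal vector `x`, i.e. `Σ_a lam(a)·a = x` in `ℝⁿ`. -/
def HasMarginal (α : ℝ) (n : ℕ) (lam : (Fin n → D3) → ℝ) (x : Fin n → ℝ) : Prop :=
  ∀ i, ∑ a : Fin n → D3, lam a * D3.emb α (a i) = x i

/-- The support of `lam` forms a chain w.r.t. the componentwise order on `Dⁿ`. -/
def ChainSupp (n : ℕ) (lam : (Fin n → D3) → ℝ) : Prop :=
  ∀ a b : Fin n → D3, lam a ≠ 0 → lam b ≠ 0 → a ≤ b ∨ b ≤ a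

/-- The box `[-α,1]ⁿ`. -/
def Box (α : ℝ) (n : ℕ) : Set (Fin n → ℝ) := {x | ∀ i, x i ∈ Set.Icc (-α) 1}

/-- `f : Dⁿ → ℝ` is α-bisubmodular. -/
def AlphaBisub (α : ℝ) (n : ℕ) (f : (Fin n → D3) → ℝ) : Prop :=
  ∀ a b : Fin n → D3,
    f (vmeet0 a b) + α * f (vjoin0 a b) + (1 - α) * f (vjoin1 a b) ≤ f a + f b

/-- Number of zero coordinates. -/
def zc {n : ℕ} (c : Fin n → D3) : ℕ := (Finset.univ.filter fun i => c i = D3.zero).card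

/-- The convex closure `f⁻(x)`. -/
noncomputable def cClos (α : ℝ) (n : ℕ) (f : (Fin n → D3) → ℝ) (x : Fin n → ℝ) : ℝ :=
  sInf {y | ∃ lam, IsDist n lam ∧ HasMarginal α n lam x ∧ y = ∑ a : Fin n → D3, lam a * f a}


/-!
Each greedy step moves `x` towards the origin along its own sign vector, stopping at the first
coordinate that hits zero. No coordinate crosses zero, so the sign vector can only lose nonzero
entries, and the coordinate attaining the minimum loses one. Hence the number of zero coordinates
strictly increases until the sign vector vanishes, which happens after at most `n` steps.
-/

namespace D3

theorem le_iff {a b : D3} : a ≤ b ↔ a = b ∨ a = zero := Iff.rfl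

theorem zero_le (a : D3) : zero ≤ a := Or.inr rfl

theorem le_zero_iff {a : D3} : a ≤ zero ↔ a = zero := by
  rw [le_iff, or_self]

theorem eq_zero_of_le_of_ne {a b : D3} (hle : a ≤ b) (hne : a ≠ b) : a = zero :=
  hle.resolve_left hne

noncomputable def sign (r : ℝ) : D3 := if r < 0 then neg else if r = 0 then zero else one

theorem sign_of_neg {r : ℝ} (h : r < 0) : sign r = neg := if_pos h

theorem sign_zero : sign 0 = zero := by simp [sign]

theorem sign_of_pos {r : ℝ} (h : 0 < r) : sign r = one := by
  simp [sign, h.not_gt, h.ne']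

theorem sign_eq_zero_iff {r : ℝ} : sign r = zero ↔ r = 0 := by
  rcases lt_trichotomy r 0 with hr | rfl | hr
  · simp [sign_of_neg hr, hr.ne]
  · simp [sign_zero]
  · simp [sign_of_pos hr, hr.ne']

theorem eq_sign {r : ℝ} {a : D3}
    (h : (r < 0 → a = neg) ∧ (r = 0 → a = zero) ∧ (0 < r → a = one)) : a = sign r := by
  obtain ⟨hneg, hzero, hpos⟩ := h
  rcases lt_trichotomy r 0 with hr | rfl | hr
  · rw [hneg hr, sign_of_neg hr]
  · rw [hzero rfl, sign_zero]
  · rw [hpos hr, sign_of_pos hr]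

theorem sign_le_neg_of_nonpos {r : ℝ} (h : r ≤ 0) : sign r ≤ neg := by
  rcases h.lt_or_eq with h | rfl
  · rw [sign_of_neg h]
  · rw [sign_zero]; exact zero_le _

theorem sign_le_one_of_nonneg {r : ℝ} (h : 0 ≤ r) : sign r ≤ one := by
  rcases h.lt_or_eq with h | rfl
  · rw [sign_of_pos h]
  · rw [sign_zero]; exact zero_le _

theorem sign_sub_mul_emb_sign_le {α r t : ℝ} (hα : 0 < α) (hneg : r < 0 → t ≤ -r / α)
    (hpos : 0 < r → t ≤ r) : sign (r - t * emb α (sign r)) ≤ sign r := by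
  rcases lt_trichotomy r 0 with hr | rfl | hr
  · have htα : t * α ≤ -r := (le_div_iff₀ hα).1 (hneg hr)
    rw [sign_of_neg hr]
    exact sign_le_neg_of_nonpos (by simp only [emb]; linarith)
  · simp [sign_zero, emb]
  · rw [sign_of_pos hr]
    exact sign_le_one_of_nonneg (by simp only [emb]; linarith [hpos hr])

theorem sub_mul_emb_sign_eq_zero {α r t : ℝ} (hα : α ≠ 0)
    (h : (r < 0 ∧ t = -r / α) ∨ (0 < r ∧ t = r)) : r - t * emb α (sign r) = 0 := by
  rcases h with ⟨hr, rfl⟩ | ⟨hr, rfl⟩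
  · rw [sign_of_neg hr, emb]; field_simp; ring
  · rw [sign_of_pos hr, emb]; ring

end D3

theorem zc_lt_zc_of_lt {n : ℕ} {a b : Fin n → D3} (h : a < b) : zc b < zc a := by
  obtain ⟨j, hj⟩ := Function.ne_iff.1 h.ne
  have hzero : a j = D3.zero := D3.eq_zero_of_le_of_ne (h.le j) hj
  refine Finset.card_lt_card ((Finset.ssubset_iff_of_subset ?_).2 ⟨j, ?_, ?_⟩)
  · intro i hi
    simp only [mem_filter, mem_univ, true_and] at hi ⊢
    exact D3.le_zero_iff.1 (hi ▸ h.le i)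
  · simpa using hzero
  · simpa [hzero] using hj.symm

theorem eq_zero_of_zc_eq {n : ℕ} {a : Fin n → D3} (h : zc a = n) : a = fun _ => D3.zero := by
  have hall := Finset.card_filter_eq_iff.1 (h.trans (Finset.card_fin n).symm)
  exact funext fun j => by simpa using hall j (mem_univ j)

theorem zc_le {n : ℕ} (a : Fin n → D3) : zc a ≤ n :=
  (Finset.card_filter_le _ _).trans (Finset.card_fin n).le

theorem eq_zero_of_descending {n : ℕ} (v : ℕ → Fin n → D3)
    (hlt : ∀ i, v i ≠ (fun _ => D3.zero) → v (i + 1) < v i)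
    (hstay : ∀ i, v i = (fun _ => D3.zero) → v (i + 1) = fun _ => D3.zero) :
    v n = fun _ => D3.zero := by
  have hcount : ∀ i, v i ≠ (fun _ => D3.zero) → i ≤ zc (v i) := by
    intro i
    induction i with
    | zero => exact fun _ => Nat.zero_le _
    | succ i ih =>
      intro hi
      have hprev : v i ≠ fun _ => D3.zero := fun h => hi (hstay i h)
      exact (ih hprev).trans_lt (zc_lt_zc_of_lt (hlt i hprev))
  by_contra hn
  exact hn (eq_zero_of_zc_eq ((zc_le _).antisymm (hcount n hn)))

section Greedy

variable {n : ℕ} (α : ℝ)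

def greedyCandidates (y : Fin n → ℝ) : Set ℝ :=
  {r | ∃ j, (y j < 0 ∧ r = -(y j) / α) ∨ (0 < y j ∧ r = y j)}

noncomputable def greedyStep (y : Fin n → ℝ) : ℝ := sInf (greedyCandidates α y)

noncomputable def greedyNext (y : Fin n → ℝ) : Fin n → ℝ :=
  fun j => y j - greedyStep α y * D3.emb α (D3.sign (y j))

variable {α}

theorem greedyCandidates_finite (y : Fin n → ℝ) : (greedyCandidates α y).Finite := by
  refine ((Set.finite_range fun j => -(y j) / α).union (Set.finite_range y)).subset ?_
  rintro r ⟨j, ⟨_, rfl⟩ | ⟨_, rfl⟩⟩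
  · exact Or.inl ⟨j, rfl⟩
  · exact Or.inr ⟨j, rfl⟩

theorem greedyCandidates_nonempty {y : Fin n → ℝ} (hy : y ≠ 0) :
    (greedyCandidates α y).Nonempty := by
  obtain ⟨j, hj⟩ := Function.ne_iff.1 hy
  rcases hj.lt_or_gt with h | h
  · exact ⟨_, j, Or.inl ⟨h, rfl⟩⟩
  · exact ⟨_, j, Or.inr ⟨h, rfl⟩⟩

theorem greedyStep_mem {y : Fin n → ℝ} (hy : y ≠ 0) : greedyStep α y ∈ greedyCandidates α y :=
  (greedyCandidates_nonempty hy).csInf_mem (greedyCandidates_finite y)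

theorem greedyStep_le {y : Fin n → ℝ} {r : ℝ} (hr : r ∈ greedyCandidates α y) :
    greedyStep α y ≤ r :=
  csInf_le (greedyCandidates_finite y).bddBelow hr

theorem sign_greedyNext_lt (hα : 0 < α) {y : Fin n → ℝ} (hy : y ≠ 0) :
    (fun j => D3.sign (greedyNext α y j)) < fun j => D3.sign (y j) := by
  refine lt_of_le_of_ne (fun j => D3.sign_sub_mul_emb_sign_le hα
    (fun h => greedyStep_le ⟨j, Or.inl ⟨h, rfl⟩⟩) (fun h => greedyStep_le ⟨j, Or.inr ⟨h, rfl⟩⟩))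
    fun h => ?_
  obtain ⟨j, hj⟩ := greedyStep_mem (α := α) hy
  have hnext : greedyNext α y j = 0 := D3.sub_mul_emb_sign_eq_zero hα.ne' hj
  have hyj : y j ≠ 0 := by rcases hj with ⟨h, -⟩ | ⟨h, -⟩ <;> [exact h.ne; exact h.ne']
  have := congrFun h j
  rw [hnext, D3.sign_zero, eq_comm, D3.sign_eq_zero_iff] at this
  exact hyj this

end Greedy

theorem stmt17_general (α : ℝ) (hα : α ∈ Set.Ioc (0 : ℝ) 1) (n : ℕ)
    (u : ℕ → Fin n → D3) (xs : ℕ → Fin n → ℝ) (lam : ℕ → ℝ)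
    (hu : ∀ i j, (xs i j < 0 → u i j = D3.neg) ∧ (xs i j = 0 → u i j = D3.zero) ∧
      (0 < xs i j → u i j = D3.one))
    (hlam : ∀ i, u i ≠ (fun _ => D3.zero) →
      lam i = sInf {r : ℝ | ∃ j, (xs i j < 0 ∧ r = -(xs i j) / α) ∨ (0 < xs i j ∧ r = xs i j)})
    (hrec : ∀ i, xs (i + 1) = fun j => xs i j - lam i * D3.emb α (u i j)) :
    (∀ i, u i ≠ (fun _ => D3.zero) → u (i + 1) < u i) ∧ u n = fun _ => D3.zero := by
  have hsign : ∀ i, u i = fun j => D3.sign (xs i j) := fun i => funext fun j => D3.eq_sign (hu i j)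
  have hzero_iff : ∀ i, u i = (fun _ => D3.zero) ↔ xs i = 0 := fun i => by
    simp only [hsign i, funext_iff, D3.sign_eq_zero_iff, Pi.zero_apply]
  have hlt : ∀ i, u i ≠ (fun _ => D3.zero) → u (i + 1) < u i := by
    intro i hi
    have hnext : xs (i + 1) = greedyNext α (xs i) := by
      rw [hrec, hlam i hi, hsign i]
      rfl
    rw [hsign (i + 1), hsign i, hnext]
    exact sign_greedyNext_lt hα.1 (mt (hzero_iff i).2 hi)
  have hstay : ∀ i, u i = (fun _ => D3.zero) → u (i + 1) = fun _ => D3.zero := by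
    intro i hi
    rw [hzero_iff, hrec, hi, (hzero_iff i).1 hi]
    funext j
    simp [D3.emb]
  exact ⟨hlt, eq_zero_of_descending u hlt hstay⟩

/-- the greedy construction yields a strictly decreasing chain of
sign vectors and terminates in at most `n+1` steps (0-based: `u n = 0`). -/
theorem stmt17 (α : ℝ) (hα : α ∈ Set.Ioc (0 : ℝ) 1) (n : ℕ) (x : Fin n → ℝ)
    (hx : x ∈ Box α n)
    (u : ℕ → Fin n → D3) (xs : ℕ → Fin n → ℝ) (lam : ℕ → ℝ)
    (hxs0 : xs 0 = x)
    (hu : ∀ i j, (xs i j < 0 → u i j = D3.neg) ∧ (xs i j = 0 → u i j = D3.zero) ∧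
      (0 < xs i j → u i j = D3.one))
    (hlam : ∀ i, u i ≠ (fun _ => D3.zero) →
      lam i = sInf {r : ℝ | ∃ j, (xs i j < 0 ∧ r = -(xs i j) / α) ∨ (0 < xs i j ∧ r = xs i j)})
    (hrec : ∀ i, xs (i + 1) = fun j => xs i j - lam i * D3.emb α (u i j)) :
    (∀ i, u i ≠ (fun _ => D3.zero) → u (i + 1) < u i) ∧ u n = fun _ => D3.zero :=
  stmt17_general α hα n u xs lam hu hlam hrec
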